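/- arXiv:2410.18259 — 4 statements merged into one kernel-verified Lean document; each statement's English description precedes it below -/
import Mathlib

section
/- For every integer n ≥ 2 and every function f from the primes to the real numbers, Σ_{d | n, d > 1} μ(d) f(p(d)) = −f(P(n)), where the sum runs over all divisors d > 1 of n. -/
open Finset ArithmeticFunction

/-- The largest prime factor of `n` (junk value `0` for `n ≤ 1`). -/
def maxPrimeFac (n : ℕ) : ℕ := n.primeFactors.sup _root_.id

/-! Squarefree divisors `d > 1` of `n` are the products of nonempty sets `t` of prime factors of
`n`, with `μ d = (-1) ^ #t` and `p(d) = min t`. The alternating sum over nonempty `t ⊆ s` is then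
computed by adding least elements one at a time: the new subsets all have the new least element `a`
as minimum, and their signs cancel unless `a` is the only element, so only `max s` survives. -/

namespace Finset

variable {α : Type*} [LinearOrder α]

theorem min'_insert_of_forall_lt {a : α} {t : Finset α} (ha : ∀ b ∈ t, a < b) :
    (insert a t).min' (insert_nonempty a t) = a :=
  le_antisymm (min'_le _ _ (mem_insert_self a t)) <| le_min' _ _ _ fun b hb => by
    rcases mem_insert.mp hb with rfl | hb
    exacts [le_rfl, (ha b hb).le]

theorem sum_powerset_neg_one_pow_card_mul_min' {R : Type*} [CommRing R] (g : α → R)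
    {s : Finset α} (hs : s.Nonempty) :
    ∑ t ∈ s.powerset, (if h : t.Nonempty then (-1) ^ #t * g (t.min' h) else 0)
      = -g (s.max' hs) := by
  induction s using Finset.induction_on_min with
  | empty => simp at hs
  | insert a s ha ih =>
    have has : a ∉ s := fun h => lt_irrefl a (ha a h)
    have hins : ∀ t ∈ s.powerset,
        (if h : (insert a t).Nonempty then (-1) ^ #(insert a t) * g ((insert a t).min' h) else 0)
          = -g a * (-1) ^ #t := by
      intro t ht
      have hts := mem_powerset.mp ht
      rw [dif_pos (insert_nonempty a t), min'_insert_of_forall_lt fun b hb => ha b (hts hb),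
        card_insert_of_notMem fun h => has (hts h), pow_succ]
      ring
    have hsigns : ∑ t ∈ s.powerset, (-1 : R) ^ #t = if s = ∅ then 1 else 0 := by
      exact_mod_cast congrArg (Int.cast : ℤ → R) sum_powerset_neg_one_pow_card
    rw [sum_powerset_insert has, sum_congr rfl hins, ← mul_sum, hsigns]
    rcases s.eq_empty_or_nonempty with rfl | hsne
    · simp
    · rw [ih hsne, if_neg hsne.ne_empty, max'_insert a s hsne,
        max_eq_right (ha _ (s.max'_mem hsne)).le]
      ring

end Finset

namespace Nat

theorem minFac_eq_min'_primeFactors {n : ℕ} (h : n.primeFactors.Nonempty) :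
    n.minFac = n.primeFactors.min' h := by
  have hmin := n.primeFactors.min'_mem h
  have hn1 : n ≠ 1 := by rintro rfl; simp at h
  refine le_antisymm (minFac_le_of_dvd (prime_of_mem_primeFactors hmin).two_le
    (dvd_of_mem_primeFactors hmin)) (min'_le _ _ ?_)
  exact mem_primeFactors.mpr ⟨minFac_prime hn1, minFac_dvd n, (nonempty_primeFactors.mp h).ne_bot⟩

theorem minFac_prod_primes {s : Finset ℕ} (hs : ∀ p ∈ s, p.Prime) (h : s.Nonempty) :
    (∏ p ∈ s, p).minFac = s.min' h := by
  have h' : (∏ p ∈ s, p).primeFactors.Nonempty := by rwa [primeFactors_prod hs]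
  rw [minFac_eq_min'_primeFactors h']
  congr 1
  exact primeFactors_prod hs

theorem one_lt_prod_primes_iff {s : Finset ℕ} (hs : ∀ p ∈ s, p.Prime) :
    1 < ∏ p ∈ s, p ↔ s.Nonempty := by
  rw [← nonempty_primeFactors, primeFactors_prod hs]

end Nat

namespace ArithmeticFunction

theorem moebius_prod_primes {s : Finset ℕ} (hs : ∀ p ∈ s, p.Prime) :
    moebius (∏ p ∈ s, p) = (-1) ^ #s := by
  rw [isMultiplicative_moebius.map_prod_of_prime s hs,
    prod_congr rfl fun p hp => moebius_apply_prime (hs p hp), prod_const]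

theorem sum_divisors_moebius_mul {R : Type*} [CommRing R] {n : ℕ} (hn : n ≠ 0) (F : ℕ → R) :
    ∑ d ∈ n.divisors, (moebius d : R) * F d
      = ∑ t ∈ n.primeFactors.powerset, (-1) ^ #t * F (∏ p ∈ t, p) := by
  have hsq : ∑ d ∈ n.divisors, (moebius d : R) * F d
      = ∑ d ∈ n.divisors with Squarefree d, (moebius d : R) * F d := by
    refine (sum_filter_of_ne fun d _ hd => ?_).symm
    by_contra h
    simp [moebius_eq_zero_of_not_squarefree h] at hd
  have hfactors : (UniqueFactorizationMonoid.normalizedFactors n).toFinset = n.primeFactors := by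
    rw [Nat.factors_eq]
    exact n.toFinset_factors
  rw [hsq, Nat.sum_divisors_filter_squarefree hn, hfactors]
  refine sum_congr rfl fun t ht => ?_
  have hprimes : ∀ p ∈ t, p.Prime := fun p hp =>
    Nat.prime_of_mem_primeFactors (mem_powerset.mp ht hp)
  have hval : t.val.prod = ∏ p ∈ t, p := by rw [prod_eq_multiset_prod, Multiset.map_id']
  rw [hval, moebius_prod_primes hprimes, Int.cast_pow, Int.cast_neg, Int.cast_one]

end ArithmeticFunction

/-- Duality identity: for `n ≥ 2` and any real-valued function `f` on the primes,
`Σ_{d ∣ n, d > 1} μ(d) f(p(d)) = −f(P(n))`, where `p(d)` is the smallest prime factor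
and `P(n)` the largest prime factor. -/
theorem duality_smallest_to_largest (n : ℕ) (hn : 2 ≤ n) (f : ℕ → ℝ) :
    ∑ d ∈ n.divisors.filter (fun d => 1 < d), (moebius d : ℝ) * f d.minFac
      = - f (maxPrimeFac n) := by
  have hne : n.primeFactors.Nonempty := Nat.nonempty_primeFactors.mpr hn
  calc ∑ d ∈ n.divisors with 1 < d, (moebius d : ℝ) * f d.minFac
      = ∑ d ∈ n.divisors, (moebius d : ℝ) * if 1 < d then f d.minFac else 0 := by
        simp only [sum_filter, mul_ite, mul_zero]
    _ = ∑ t ∈ n.primeFactors.powerset,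
          (-1) ^ #t * if 1 < ∏ p ∈ t, p then f (∏ p ∈ t, p).minFac else 0 :=
        sum_divisors_moebius_mul (by omega) _
    _ = ∑ t ∈ n.primeFactors.powerset,
          if h : t.Nonempty then (-1) ^ #t * f (t.min' h) else 0 := by
        refine sum_congr rfl fun t ht => ?_
        have hprimes : ∀ p ∈ t, p.Prime := fun p hp =>
          Nat.prime_of_mem_primeFactors (mem_powerset.mp ht hp)
        simp only [Nat.one_lt_prod_primes_iff hprimes]
        split_ifs with h
        · rw [Nat.minFac_prod_primes hprimes h]
        · exact mul_zero _
    _ = -f (n.primeFactors.max' hne) := sum_powerset_neg_one_pow_card_mul_min' f hne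
    _ = -f (maxPrimeFac n) := by rw [maxPrimeFac, ← sup'_eq_sup hne, ← max'_eq_sup']
end

section
/- For every integer n ≥ 2 and every function f from the primes to the real numbers, Σ_{d | n, d > 1} μ(d) f(P(d)) = −f(p(n)), where the sum runs over all divisors d > 1 of n. -/
/-!
The squarefree divisors of `n` are the products of subsets `t` of the prime factors of `n`, with
`μ(∏ t) = (-1)^|t|` and `P(∏ t) = max t`. Grouping the subsets of a finite linear order by their
maximum `a`, the subsets with maximum `a` are `insert a u` with `u` ranging over all subsets of the
elements below `a`; their signs cancel unless no element lies below `a`, i.e. unless `a` is the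
minimum. Only the empty set (the divisor `1`) and the minimum (the prime `p(n)`) survive.
-/

open Finset ArithmeticFunction

theorem Finset.sum_powerset_neg_one_pow_card_mul_sup {α R : Type*} [LinearOrder α] [OrderBot α]
    [CommRing R] (f : α → R) {s : Finset α} (hs : s.Nonempty) :
    ∑ t ∈ s.powerset, (-1) ^ #t * f (t.sup id) = f ⊥ - f (s.min' hs) := by
  induction s using Finset.induction_on_max with
  | empty => exact absurd hs not_nonempty_empty
  | insert a s hlt ih =>
    have ha : a ∉ s := fun h => (hlt a h).false
    have hinsert : ∀ t ∈ s.powerset,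
        (-1 : R) ^ #(insert a t) * f ((insert a t).sup id) = -f a * (-1) ^ #t := by
      intro t ht
      have hat : t ⊆ s := mem_powerset.mp ht
      have hsup : (insert a t).sup id = a :=
        sup_insert.trans (sup_eq_left.mpr (Finset.sup_le fun b hb => (hlt b (hat hb)).le))
      rw [hsup, card_insert_of_notMem fun h => ha (hat h), pow_succ]
      ring
    rw [sum_powerset_insert ha, sum_congr rfl hinsert, ← mul_sum]
    rcases s.eq_empty_or_nonempty with rfl | hs'
    · simp [sub_eq_add_neg]
    · have hsigns : ∑ t ∈ s.powerset, (-1 : R) ^ #t = 0 := by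
        exact_mod_cast congrArg (Int.cast : ℤ → R) (sum_powerset_neg_one_pow_card_of_nonempty hs')
      have hmin : (insert a s).min' hs = s.min' hs' :=
        (min'_insert a s hs').trans (min_eq_right (hlt _ (s.min'_mem hs')).le)
      rw [ih hs', hsigns, hmin]
      ring

theorem Nat.min'_primeFactors {n : ℕ} (h : n.primeFactors.Nonempty) :
    n.primeFactors.min' h = n.minFac := by
  have hn : n ≠ 1 := fun h1 => by simp [h1] at h
  have hn0 : n ≠ 0 := fun h0 => by simp [h0] at h
  refine le_antisymm (min'_le _ _ ?_) (le_min' _ _ _ fun p hp => ?_)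
  · exact Nat.mem_primeFactors.mpr ⟨Nat.minFac_prime hn, Nat.minFac_dvd n, hn0⟩
  · exact Nat.minFac_le_of_dvd (Nat.prime_of_mem_primeFactors hp).two_le
      (Nat.dvd_of_mem_primeFactors hp)

theorem sum_divisors_moebius_mul_maxPrimeFac {R : Type*} [CommRing R] (f : ℕ → R) {n : ℕ}
    (hn : n ≠ 0) :
    ∑ d ∈ n.divisors, (moebius d : R) * f (maxPrimeFac d)
      = ∑ t ∈ n.primeFactors.powerset, (-1) ^ #t * f (t.sup id) := by
  have hsquarefree : ∑ d ∈ n.divisors with Squarefree d, (moebius d : R) * f (maxPrimeFac d)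
      = ∑ d ∈ n.divisors, (moebius d : R) * f (maxPrimeFac d) := by
    refine sum_filter_of_ne fun d _ hd => ?_
    by_contra hsq
    simp [moebius_eq_zero_of_not_squarefree hsq] at hd
  rw [← hsquarefree, Nat.sum_divisors_filter_squarefree hn, Nat.factors_eq,
    List.toFinset_coe, Nat.toFinset_factors]
  refine sum_congr rfl fun t ht => ?_
  have htn : t ⊆ n.primeFactors := mem_powerset.mp ht
  have hprime : ∀ p ∈ t, p.Prime := fun p hp => Nat.prime_of_mem_primeFactors (htn hp)
  have hmoebius : moebius (∏ p ∈ t, p) = (-1) ^ #t := by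
    rw [isMultiplicative_moebius.map_prod_of_prime t hprime,
      prod_congr rfl fun p hp => moebius_apply_prime (hprime p hp), prod_const]
  rw [t.prod_val, Function.id_def, hmoebius, maxPrimeFac, Nat.primeFactors_prod hprime]
  push_cast
  rfl

/-- Duality identity: for `n ≥ 2` and any real-valued function `f` on the primes,
`Σ_{d ∣ n, d > 1} μ(d) f(P(d)) = −f(p(n))`, where `p(n)` is the smallest prime factor
and `P(d)` the largest prime factor. -/
theorem duality_largest_to_smallest (n : ℕ) (hn : 2 ≤ n) (f : ℕ → ℝ) :
    ∑ d ∈ n.divisors.filter (fun d => 1 < d), (moebius d : ℝ) * f (maxPrimeFac d)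
      = - f n.minFac := by
  have hn0 : n ≠ 0 := by omega
  have hS : n.primeFactors.Nonempty := Nat.nonempty_primeFactors.mpr hn
  have hfilter : n.divisors.filter (fun d => 1 < d) = n.divisors.erase 1 := by
    rw [← filter_ne']
    exact filter_congr fun d hd => by have := Nat.pos_of_mem_divisors hd; omega
  rw [hfilter, sum_erase_eq_sub (Nat.one_mem_divisors.mpr hn0),
    sum_divisors_moebius_mul_maxPrimeFac f hn0, sum_powerset_neg_one_pow_card_mul_sup f hS,
    Nat.min'_primeFactors]
  simp [maxPrimeFac]
end

section
/- Let k be a positive integer. For every integer n ≥ 2 and every function f from the primes to the real numbers, Σ_{d | n, d > 1, ω(d) ≥ k} μ(d) f(P_k(d)) = (−1)^k · C(ω(n)−1, k−1) · f(p(n)), where C(·,·) is the binomial coefficient (equal to 0 when ω(n)−1 < k−1) and the sum runs over divisors d > 1 of n having at least k distinct prime factors. -/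
/-!
Only squarefree divisors `d` contribute, and they correspond to the sets `S` of prime factors
of `n`, with `μ(d) = (-1)^#S`. Adding the least prime `p(n)` to a set `T ∌ p(n)` with `#T ≥ k`
keeps its `k`-th largest element and flips the sign, so these terms cancel in pairs; what
survives are the sets `insert p(n) T` with `#T = k - 1`, each contributing `(-1)^k f(p(n))`.
-/

open Finset ArithmeticFunction

/-- The `k`-th largest distinct prime factor of `n` (for `k ≥ 1`), defined when
`ω(n) ≥ k`; junk value `1` otherwise. -/
def kthLargestPrimeFac (k n : ℕ) : ℕ :=
  ((n.primeFactors.sort (· ≤ ·)).reverse).getD (k - 1) 1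

section KthLargest

variable {α : Type*} [LinearOrder α]

/-- The `k`-th largest element of `S` for `1 ≤ k ≤ #S`, and `d` when `#S < k`. -/
def Finset.kthLargest (k : ℕ) (S : Finset α) (d : α) : α :=
  ((S.sort (· ≤ ·)).reverse).getD (k - 1) d

theorem kthLargestPrimeFac_eq_kthLargest (k n : ℕ) :
    kthLargestPrimeFac k n = n.primeFactors.kthLargest k 1 :=
  rfl

variable {S : Finset α} {p d : α} {k : ℕ}

theorem Finset.kthLargest_insert_of_lt_card (hp : ∀ q ∈ S, p ≤ q) (hpS : p ∉ S)
    (hk : k < #S) : (insert p S).kthLargest (k + 1) d = S.kthLargest (k + 1) d := by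
  rw [kthLargest, sort_insert _ hp hpS, List.reverse_cons,
    List.getD_append _ _ _ _ (by simpa using hk), kthLargest]

theorem Finset.kthLargest_insert_of_card_eq (hp : ∀ q ∈ S, p ≤ q) (hpS : p ∉ S)
    (hk : #S = k) : (insert p S).kthLargest (k + 1) d = p := by
  rw [kthLargest, sort_insert _ hp hpS, List.reverse_cons,
    List.getD_append_right _ _ _ _ (by simp [hk])]
  simp [hk]

theorem Finset.sum_powerset_neg_one_pow_mul_kthLargest {R : Type*} [CommRing R]
    (P : Finset α) (hP : P.Nonempty) (m : ℕ) (d : α) (f : α → R) :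
    ∑ S ∈ P.powerset with m + 1 ≤ #S, (-1) ^ #S * f (S.kthLargest (m + 1) d)
      = (-1) ^ (m + 1) * ((#P - 1).choose m : R) * f (P.min' hP) := by
  set p := P.min' hP
  set T := P.erase p
  have hpT : p ∉ T := notMem_erase p P
  have hp : ∀ q ∈ T, p ≤ q := fun q hq => P.min'_le q (mem_of_mem_erase hq)
  have hpair : ∀ S ∈ T.powerset,
      ((if m + 1 ≤ #S then (-1 : R) ^ #S * f (S.kthLargest (m + 1) d) else 0) +
        if m + 1 ≤ #(insert p S) then
          (-1) ^ #(insert p S) * f ((insert p S).kthLargest (m + 1) d) else 0)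
      = if #S = m then (-1) ^ (m + 1) * f p else 0 := by
    intro S hS
    have hpS : p ∉ S := fun h => hpT (mem_powerset.mp hS h)
    have hpS' : ∀ q ∈ S, p ≤ q := fun q hq => hp q (mem_powerset.mp hS hq)
    rw [card_insert_of_notMem hpS]
    rcases lt_trichotomy #S m with h | h | h
    · simp only [if_neg (show ¬m + 1 ≤ #S by omega), if_neg (show ¬m + 1 ≤ #S + 1 by omega),
        if_neg h.ne, add_zero]
    · subst h
      simp [kthLargest_insert_of_card_eq hpS' hpS rfl]
    · rw [if_pos (by omega), if_pos (by omega), if_neg h.ne',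
        kthLargest_insert_of_lt_card hpS' hpS h, pow_succ]
      ring
  have hcard : #T = #P - 1 := card_erase_of_mem (P.min'_mem hP)
  rw [sum_filter, ← insert_erase (P.min'_mem hP), sum_powerset_insert hpT, ← sum_add_distrib,
    sum_congr rfl hpair, ← sum_filter, ← powersetCard_eq_filter, sum_const, card_powersetCard,
    hcard, nsmul_eq_mul, mul_left_comm, mul_assoc, insert_erase (P.min'_mem hP)]

end KthLargest

theorem Nat.sum_divisors_moebius_mul_primeFactors {R : Type*} [CommRing R] {n : ℕ} (hn : n ≠ 0)
    (g : Finset ℕ → R) :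
    ∑ d ∈ n.divisors, (moebius d : R) * g d.primeFactors
      = ∑ S ∈ n.primeFactors.powerset, (-1) ^ #S * g S := by
  rw [← sum_filter_of_ne fun d _ h => moebius_ne_zero_iff_squarefree.mp fun h0 =>
      h (by rw [h0, Int.cast_zero, zero_mul]),
    Nat.sum_divisors_filter_squarefree hn, Nat.factors_eq, List.toFinset_coe,
    Nat.toFinset_factors]
  refine sum_congr rfl fun S hS => ?_
  have hprime : ∀ p ∈ S, p.Prime := fun p hp =>
    Nat.prime_of_mem_primeFactors (mem_powerset.mp hS hp)
  simp only [prod_val, id]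
  rw [Nat.primeFactors_prod hprime, isMultiplicative_moebius.map_prod_of_prime S hprime,
    prod_congr rfl fun p hp => moebius_apply_prime (hprime p hp), prod_const, Int.cast_pow, Int.cast_neg, Int.cast_one]

/-- Duality identity: for `k ≥ 1`, `n ≥ 2` and any real-valued function `f` on the primes,
`Σ_{d ∣ n, d > 1, ω(d) ≥ k} μ(d) f(P_k(d)) = (−1)^k C(ω(n)−1, k−1) f(p(n))`. -/
theorem duality_kth_largest (k : ℕ) (hk : 1 ≤ k) (n : ℕ) (hn : 2 ≤ n) (f : ℕ → ℝ) :
    ∑ d ∈ n.divisors.filter (fun d => 1 < d ∧ k ≤ d.primeFactors.card),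
        (moebius d : ℝ) * f (kthLargestPrimeFac k d)
      = (-1) ^ k * ((n.primeFactors.card - 1).choose (k - 1) : ℝ) * f n.minFac := by
  obtain ⟨m, rfl⟩ : ∃ m, k = m + 1 := ⟨k - 1, by omega⟩
  have hP : n.primeFactors.Nonempty := Nat.nonempty_primeFactors.mpr hn
  have hfilter : ∀ d : ℕ, 1 < d ∧ m + 1 ≤ #d.primeFactors ↔ m + 1 ≤ #d.primeFactors :=
    fun d => and_iff_right_of_imp fun h =>
      Nat.nonempty_primeFactors.mp (card_pos.mp (by omega))
  calc _ = ∑ d ∈ n.divisors, (moebius d : ℝ) * (if m + 1 ≤ #d.primeFactors then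
              f (d.primeFactors.kthLargest (m + 1) 1) else 0) := by
          simp only [hfilter, sum_filter, mul_ite, mul_zero, kthLargestPrimeFac_eq_kthLargest]
    _ = ∑ S ∈ n.primeFactors.powerset with m + 1 ≤ #S,
          (-1) ^ #S * f (S.kthLargest (m + 1) 1) := by
          rw [Nat.sum_divisors_moebius_mul_primeFactors (by omega)
            (fun S => if m + 1 ≤ #S then f (S.kthLargest (m + 1) 1) else 0), sum_filter]
          simp only [mul_ite, mul_zero]
    _ = _ := by
          rw [sum_powerset_neg_one_pow_mul_kthLargest _ hP, Nat.min'_primeFactors,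
            Nat.add_sub_cancel]
end

section
/- There exists a constant C > 0 such that uniformly for all real x and T with 2 ≤ T ≤ x, the number of positive integers n ≤ x with P₂(n) ≤ T is at most C · x · log T / log x. -/
/-!
Put `N = ⌊x⌋` and `t = ⌊T⌋`. If `P₂(n) ≤ T`, then at most one prime factor of `n` exceeds `t`,
so `n = m q` with `m` its `t`-smooth part and `q` either `1` or a prime power. Summing
`log N = log (N / n) + log m + log q` over these `n ≤ N`:
* `∑ log (N / n) ≤ N`, because `N ^ N / N! ≤ e ^ N`;
* `∑ log m` is at most the logarithm of the `t`-smooth part of `N!`, which by Legendre's formula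
  and Mertens' first theorem is `≤ 2 N ∑_{p ≤ t} log p / p ≪ N log t`;
* `n` is determined by `(m, q)`, so `∑ log q ≤ ∑_m ∑_{q ≤ N / m} log q ≪ N ∑_m 1 / m`, and the
  sum over `t`-smooth `m` is at most `∏_{p ≤ t} (1 - 1/p)⁻¹ ≪ log t` by the Euler product and
  Mertens' second theorem.
Hence the count times `log N` is `≪ N log t`, and `log x ≤ 2 log N`.
-/

open Finset Real

/-- The second largest distinct prime factor of `n`: the largest prime factor of `n`
strictly less than `P(n)`, with the convention `P₂(n) = 1` if `n` has fewer than two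
distinct prime factors. -/
def secondLargestPrimeFac (n : ℕ) : ℕ :=
  ((n.primeFactors.sort (· ≤ ·)).reverse).getD 1 1

open scoped Nat

theorem le_secondLargestPrimeFac {n p q : ℕ} (hp : p ∈ n.primeFactors)
    (hq : q ∈ n.primeFactors) (hpq : p < q) : p ≤ secondLargestPrimeFac n := by
  set l := (n.primeFactors.sort (· ≤ ·)).reverse
  have hl : l.Pairwise (· ≥ ·) := List.pairwise_reverse.2 (Finset.pairwise_sort _ _)
  have hge : ∀ (i j : ℕ) (hi : i < l.length) (hj : j < l.length), i ≤ j → l[j] ≤ l[i] :=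
    fun i j hi hj hij => hl.rel_get_of_le (a := ⟨i, hi⟩) (b := ⟨j, hj⟩) hij
  obtain ⟨i, hi, rfl⟩ := List.mem_iff_getElem.1 (show p ∈ l by simpa [l] using hp)
  obtain ⟨j, hj, rfl⟩ := List.mem_iff_getElem.1 (show q ∈ l by simpa [l] using hq)
  have hi1 : 1 ≤ i := by
    by_contra! h
    obtain rfl : i = 0 := by omega
    exact (hge 0 j hi hj (Nat.zero_le j)).not_gt hpq
  change l[i] ≤ l.getD 1 1
  rw [List.getD_eq_getElem _ _ (by omega)]
  exact hge 1 i (by omega) hi hi1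

theorem card_primeFactors_filter_lt_le_one {n t : ℕ} (h : secondLargestPrimeFac n ≤ t) :
    #{p ∈ n.primeFactors | t < p} ≤ 1 := by
  refine card_le_one.2 fun p hp q hq => ?_
  simp only [mem_filter] at hp hq
  by_contra! hpq
  rcases hpq.lt_or_gt with hlt | hlt
  · exact (le_secondLargestPrimeFac hp.1 hq.1 hlt).trans h |>.not_gt hp.2
  · exact (le_secondLargestPrimeFac hq.1 hp.1 hlt).trans h |>.not_gt hq.2

theorem sum_Icc_log_div_le (N : ℕ) : ∑ n ∈ Icc 1 N, log ((N : ℝ) / n) ≤ N := by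
  rcases N.eq_zero_or_pos with rfl | hN
  · simp
  have hprod : ∏ n ∈ Icc 1 N, ((N : ℝ) / n) = (N : ℝ) ^ N / N ! := by
    rw [prod_div_distrib, prod_const, Nat.card_Icc, Nat.add_sub_cancel, ← Nat.cast_prod,
      ← Ico_add_one_right_eq_Icc, prod_Ico_id_eq_factorial]
  rw [← log_prod fun n hn => by have := (mem_Icc.1 hn).1; positivity, hprod]
  exact (log_le_iff_le_exp (by positivity)).2 (pow_div_factorial_le_exp _ N.cast_nonneg N)

theorem mul_inv_sub_inv_le_log_sub_log {u v : ℝ} (hu : 0 < u) (hv : 0 < v) :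
    u * (u⁻¹ - v⁻¹) ≤ log v - log u := by
  have := one_sub_inv_le_log_of_pos (div_pos hv hu)
  rw [log_div hv.ne' hu.ne', inv_div] at this
  rwa [mul_sub, mul_inv_cancel₀ hu.ne', ← div_eq_mul_inv]

theorem inv_one_sub_le_exp {u : ℝ} (hu : u ≤ 1 / 2) : (1 - u)⁻¹ ≤ exp (u + 2 * u ^ 2) := by
  rw [inv_le_iff_one_le_mul₀' (by linarith)]
  calc (1 : ℝ) ≤ (1 - u) * (u + 2 * u ^ 2 + 1) := by
        nlinarith [mul_nonneg (sq_nonneg u) (by linarith : 0 ≤ 1 - 2 * u)]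
    _ ≤ (1 - u) * exp (u + 2 * u ^ 2) := by
        gcongr
        · linarith
        · exact add_one_le_exp _

theorem log_four_lt : log 4 < 1.39 := by
  rw [show (4 : ℝ) = 2 ^ 2 by norm_num, log_pow]
  push_cast
  linarith [log_two_lt_d9]

theorem log_sq_le_sixteen_mul_sqrt {x : ℝ} (hx : 1 ≤ x) : log x ^ 2 ≤ 16 * √x :=
  calc log x ^ 2 ≤ (x ^ (1 / 4 : ℝ) / (1 / 4)) ^ 2 := by
        gcongr
        · exact log_nonneg hx
        · exact log_le_rpow_div (by linarith) (by norm_num)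
    _ = 16 * √x := by
        rw [sqrt_eq_rpow, div_pow, ← rpow_natCast, ← rpow_mul (by linarith)]; norm_num; ring

namespace Chebyshev

theorem sum_log_isPrimePow_eq {x : ℝ} (hx : 0 ≤ x) :
    ∑ q ∈ Ioc 0 ⌊x⌋₊ with IsPrimePow q, log q =
      ∑ k ∈ Icc 1 ⌊log x / log 2⌋₊, k * θ (x ^ ((1 : ℝ) / k)) := by
  rw [sum_PrimePow_eq_sum_sum _ hx]
  simp only [theta, Nat.cast_pow, log_pow, mul_sum]

theorem sum_Ioc_one_mul_theta_rpow_le {x : ℝ} (hx : 2 ≤ x) :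
    ∑ k ∈ Ioc 1 ⌊log x / log 2⌋₊, k * θ (x ^ ((1 : ℝ) / k)) ≤ 47 * x := by
  set K := ⌊log x / log 2⌋₊
  have hlog2 : 0.69 < log 2 := by linarith [log_two_gt_d9]
  have hlog : 0 ≤ log x := log_nonneg (by linarith)
  have hK : (K : ℝ) ≤ log x / log 2 := Nat.floor_le (div_nonneg hlog (by linarith))
  calc ∑ k ∈ Ioc 1 K, k * θ (x ^ ((1 : ℝ) / k))
      ≤ ∑ k ∈ Icc 2 K, K * θ (x ^ ((1 : ℝ) / k)) :=
        sum_le_sum fun k hk => mul_le_mul_of_nonneg_right (mod_cast (mem_Ioc.1 hk).2)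
          (theta_nonneg _)
    _ = K * (ψ x - θ x) := by rw [← mul_sum, psi_eq_theta_add_sum_theta hx, add_sub_cancel_left]
    _ ≤ log x / log 2 * (2 * √x * log x) :=
        mul_le_mul hK ((le_abs_self _).trans (abs_psi_sub_theta_le_sqrt_mul_log (by linarith)))
          (sub_nonneg.2 (theta_le_psi x)) (div_nonneg hlog (by linarith))
    _ = 2 * √x * log x ^ 2 / log 2 := by ring
    _ ≤ 2 * √x * (16 * √x) / log 2 := by
        gcongr; exact log_sq_le_sixteen_mul_sqrt (by linarith)
    _ = 32 * (√x * √x) / log 2 := by ring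
    _ ≤ 47 * x := by rw [mul_self_sqrt (by linarith), div_le_iff₀ (by linarith)]; nlinarith

theorem sum_log_isPrimePow_le {x : ℝ} (hx0 : 0 ≤ x) :
    ∑ q ∈ Ioc 0 ⌊x⌋₊ with IsPrimePow q, log q ≤ 50 * x := by
  rcases lt_or_ge x 2 with hx | hx
  · rw [sum_eq_zero fun q hq => ?_]
    · positivity
    have : ⌊x⌋₊ < 2 := (Nat.floor_lt hx0).2 (by exact_mod_cast hx)
    simp only [mem_filter, mem_Ioc] at hq
    obtain rfl : q = 1 := by omega
    exact absurd hq.2 not_isPrimePow_one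
  have hK1 : 1 ≤ ⌊log x / log 2⌋₊ := Nat.le_floor <| by
    rw [Nat.cast_one, le_div_iff₀ (log_pos one_lt_two), one_mul]
    exact log_le_log two_pos hx
  have hhead : θ x ≤ 1.39 * x := by nlinarith [theta_le_log4_mul_x hx0, log_four_lt]
  rw [sum_log_isPrimePow_eq hx0, ← add_sum_Ioc_eq_sum_Icc hK1]
  simp only [Nat.cast_one, div_one, rpow_one, one_mul]
  linarith [sum_Ioc_one_mul_theta_rpow_le hx]

end Chebyshev

namespace Nat

def smoothPart (t n : ℕ) : ℕ := ∏ p ∈ n.primeFactors with p ≤ t, p ^ n.factorization p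

def roughPart (t n : ℕ) : ℕ := ∏ p ∈ n.primeFactors with t < p, p ^ n.factorization p

theorem smoothPart_mul_roughPart {t n : ℕ} (hn : n ≠ 0) : smoothPart t n * roughPart t n = n := by
  conv_rhs => rw [← prod_factorization_pow_eq_self hn, Finsupp.prod, support_factorization]
  simp only [smoothPart, roughPart, ← not_le]
  exact prod_filter_mul_prod_filter_not _ _ _

theorem smoothPart_pos (t n : ℕ) : 0 < smoothPart t n :=
  prod_pos fun _ hp => pow_pos (prime_of_mem_primeFactors (mem_filter.1 hp).1).pos _

theorem smoothPart_le {t n : ℕ} (hn : n ≠ 0) : smoothPart t n ≤ n :=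
  le_of_dvd (pos_of_ne_zero hn) (Dvd.intro _ (smoothPart_mul_roughPart hn))

theorem log_smoothPart_add_log_roughPart {t n : ℕ} (hn : n ≠ 0) :
    Real.log (smoothPart t n) + Real.log (roughPart t n) = Real.log n := by
  have hsr := smoothPart_mul_roughPart (t := t) hn
  rw [← Real.log_mul (mod_cast (smoothPart_pos t n).ne') (mod_cast right_ne_zero_of_mul
    (hsr ▸ hn)), ← cast_mul, hsr]

theorem log_smoothPart (t n : ℕ) :
    Real.log (smoothPart t n) = ∑ p ∈ primesLE t, n.factorization p * Real.log p := by
  rw [smoothPart, cast_prod, Real.log_prod fun p hp => by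
    have := (prime_of_mem_primeFactors (mem_filter.1 hp).1).pos; positivity]
  refine sum_subset_zero_on_sdiff (fun p hp => ?_) (fun p hp => ?_) fun p _ => by
    rw [cast_pow, Real.log_pow]
  · obtain ⟨hpn, hpt⟩ := mem_filter.1 hp
    exact mem_primesLE.2 ⟨hpt, prime_of_mem_primeFactors hpn⟩
  · obtain ⟨hpt, hpn⟩ := mem_sdiff.1 hp
    have hn : p ∉ n.factorization.support := by
      rw [support_factorization]
      exact fun h => hpn (mem_filter.2 ⟨h, (mem_primesLE.1 hpt).1⟩)
    rw [Finsupp.notMem_support_iff.1 hn, cast_zero, zero_mul]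

theorem smoothPart_mem_smoothNumbers (t n : ℕ) : smoothPart t n ∈ (t + 1).smoothNumbers := by
  refine mem_smoothNumbers'.2 fun q hq hdvd => ?_
  obtain ⟨p, hp, hqp⟩ := (Prime.dvd_finsetProd_iff hq.prime _).1 hdvd
  obtain ⟨hpn, hpt⟩ := mem_filter.1 hp
  rw [(prime_dvd_prime_iff_eq hq (prime_of_mem_primeFactors hpn)).1 (hq.dvd_of_dvd_pow hqp)]
  exact lt_succ_of_le hpt

theorem roughPart_eq_one_or_isPrimePow {t n : ℕ} (h : #{p ∈ n.primeFactors | t < p} ≤ 1) :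
    roughPart t n = 1 ∨ IsPrimePow (roughPart t n) := by
  obtain ⟨p, hp⟩ := card_le_one_iff_subset_singleton.1 h
  rcases subset_singleton_iff.1 hp with h0 | h1
  · left
    rw [roughPart, h0, prod_empty]
  · right
    have hpn := (mem_filter.1 (h1 ▸ mem_singleton_self p)).1
    have hv : n.factorization p ≠ 0 :=
      Finsupp.mem_support_iff.1 (by rwa [support_factorization])
    rw [roughPart, h1, prod_singleton]
    exact ⟨p, _, (prime_of_mem_primeFactors hpn).prime, pos_of_ne_zero hv, rfl⟩

theorem sum_Icc_log_smoothPart (t N : ℕ) :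
    ∑ n ∈ Icc 1 N, Real.log (smoothPart t n) = Real.log (smoothPart t N !) := by
  simp_rw [log_smoothPart]
  rw [sum_comm]
  refine sum_congr rfl fun p _ => ?_
  rw [← sum_mul, ← Ico_add_one_right_eq_Icc, ← prod_Ico_id_eq_factorial,
    factorization_prod_apply fun n hn => by have := (mem_Ico.1 hn).1; omega, cast_sum]

theorem factorization_factorial_le_div {p : ℕ} (hp : p.Prime) (n : ℕ) :
    ((n !).factorization p : ℝ) ≤ 2 * n / p := by
  have hp2 : (2 : ℝ) ≤ p := mod_cast hp.two_le
  have h := sub_one_mul_factorization_factorial (n := n) hp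
  have h' : ((p : ℝ) - 1) * (n !).factorization p ≤ n := by
    rw [← cast_pred hp.pos]
    exact_mod_cast h ▸ sub_le n _
  rw [le_div_iff₀ (by linarith)]
  nlinarith [(n !).factorization p |>.cast_nonneg (α := ℝ)]

theorem div_le_factorization_factorial {p : ℕ} (hp : p.Prime) (n : ℕ) :
    n / p ≤ (n !).factorization p := by
  rw [factorization_factorial hp (lt_succ_self (Nat.log p n))]
  rcases lt_or_ge n p with hnp | hpn
  · simp [Nat.div_eq_of_lt hnp]
  · have h1 : 1 ∈ Ico 1 (Nat.log p n).succ :=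
      mem_Ico.2 ⟨le_rfl, lt_succ_of_le (Nat.le_log_of_pow_le hp.one_lt (by rwa [pow_one]))⟩
    simpa using single_le_sum (f := fun i => n / p ^ i) (fun _ _ => Nat.zero_le _) h1

theorem sum_primesLE_div_mul_log_le_log_factorial (n : ℕ) :
    ∑ p ∈ primesLE n, ((n / p : ℕ) : ℝ) * Real.log p ≤ Real.log (n !) :=
  calc ∑ p ∈ primesLE n, ((n / p : ℕ) : ℝ) * Real.log p
      ≤ ∑ p ∈ primesLE n, ((n !).factorization p : ℝ) * Real.log p :=
        sum_le_sum fun p hp => mul_le_mul_of_nonneg_right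
          (mod_cast div_le_factorization_factorial (prime_of_mem_primesLE hp) n)
          (Real.log_natCast_nonneg p)
    _ = Real.log (smoothPart n n !) := (log_smoothPart n n !).symm
    _ ≤ Real.log (n !) := Real.log_le_log (mod_cast smoothPart_pos _ _)
          (mod_cast smoothPart_le (factorial_ne_zero n))

theorem sum_primesLE_log_div_le (n : ℕ) :
    ∑ p ∈ primesLE n, Real.log p / p ≤ Real.log n + 2 := by
  rcases n.eq_zero_or_pos with rfl | hn
  · simp
  have hn' : (0 : ℝ) < n := mod_cast hn
  have hfloor : ∀ p ∈ primesLE n,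
      (n : ℝ) * (Real.log p / p) ≤ ((n / p : ℕ) + 1) * Real.log p := by
    intro p hp
    have hp0 : (0 : ℝ) < p := mod_cast (prime_of_mem_primesLE hp).pos
    have : (n : ℝ) / p ≤ (n / p : ℕ) + 1 := by
      rw [← floor_div_eq_div (K := ℝ)]
      exact (lt_floor_add_one _).le
    calc (n : ℝ) * (Real.log p / p) = n / p * Real.log p := by ring
      _ ≤ _ := by gcongr
  have htheta : ∑ p ∈ primesLE n, Real.log p ≤ 2 * n := by
    rw [← Chebyshev.theta_eq_sum_primesLE_log]
    nlinarith [Chebyshev.theta_le_log4_mul_x hn'.le, log_four_lt]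
  have hfactorial : Real.log (n !) ≤ n * Real.log n := by
    rw [← Real.log_pow]
    exact Real.log_le_log (mod_cast factorial_pos n) (mod_cast factorial_le_pow n)
  suffices (n : ℝ) * ∑ p ∈ primesLE n, Real.log p / p ≤ n * (Real.log n + 2) from
    le_of_mul_le_mul_left this hn'
  calc (n : ℝ) * ∑ p ∈ primesLE n, Real.log p / p
      ≤ ∑ p ∈ primesLE n, ((n / p : ℕ) + 1) * Real.log p := by
        rw [mul_sum]; exact sum_le_sum hfloor
    _ = ∑ p ∈ primesLE n, ((n / p : ℕ) : ℝ) * Real.log p + ∑ p ∈ primesLE n, Real.log p := by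
        simp only [add_mul, one_mul, sum_add_distrib]
    _ ≤ n * (Real.log n + 2) := by linarith [sum_primesLE_div_mul_log_le_log_factorial n]

theorem log_smoothPart_factorial_le (t N : ℕ) :
    Real.log (smoothPart t N !) ≤ 2 * N * (Real.log t + 2) := by
  rw [log_smoothPart]
  calc ∑ p ∈ primesLE t, ((N !).factorization p : ℝ) * Real.log p
      ≤ ∑ p ∈ primesLE t, 2 * N / p * Real.log p :=
        sum_le_sum fun p hp => mul_le_mul_of_nonneg_right
          (factorization_factorial_le_div (prime_of_mem_primesLE hp) N) (Real.log_natCast_nonneg p)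
    _ = 2 * N * ∑ p ∈ primesLE t, Real.log p / p := by
        rw [mul_sum]; exact sum_congr rfl fun p _ => by ring
    _ ≤ 2 * N * (Real.log t + 2) := by gcongr; exact sum_primesLE_log_div_le t

/-- Abel summation of `1 / p = (log p / p) / log p`. -/
theorem sum_primesLE_inv_eq (n : ℕ) :
    ∑ p ∈ primesLE n, (p : ℝ)⁻¹ =
      (∑ p ∈ primesLE n, Real.log p / p) * (Real.log n)⁻¹ +
        ∑ k ∈ Ico 2 n, (∑ p ∈ primesLE k, Real.log p / p) *
          ((Real.log k)⁻¹ - (Real.log (k + 1 : ℕ))⁻¹) := by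
  set g : ℕ → ℝ := fun k => (Real.log k)⁻¹
  have hsplit : ∀ p ∈ primesLE n, (p : ℝ)⁻¹ =
      Real.log p / p * g n + ∑ k ∈ Ico p n, Real.log p / p * (g k - g (k + 1)) := by
    intro p hp
    have hlog : Real.log p ≠ 0 :=
      (Real.log_pos (mod_cast (prime_of_mem_primesLE hp).one_lt)).ne'
    have htel : ∑ k ∈ Ico p n, (g k - g (k + 1)) = g p - g n := by
      simpa only [sub_neg_eq_add, neg_add_eq_sub] using
        sum_Ico_sub (fun k => -g k) (le_of_mem_primesLE hp)
    rw [← mul_sum, htel, mul_sub, add_sub_cancel, div_mul_eq_mul_div, mul_inv_cancel₀ hlog,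
      one_div]
  have hswap : ∑ p ∈ primesLE n, ∑ k ∈ Ico p n, Real.log p / p * (g k - g (k + 1)) =
      ∑ k ∈ Ico 2 n, (∑ p ∈ primesLE k, Real.log p / p) * (g k - g (k + 1)) := by
    simp_rw [sum_mul]
    refine sum_comm' fun p k => ?_
    simp only [mem_primesLE, mem_Ico]
    constructor
    · rintro ⟨⟨-, hp⟩, hpk, hkn⟩; exact ⟨⟨hpk, hp⟩, hp.two_le.trans hpk, hkn⟩
    · rintro ⟨⟨hpk, hp⟩, -, hkn⟩; exact ⟨⟨by omega, hp⟩, hpk, hkn⟩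
  rw [sum_congr rfl hsplit, sum_add_distrib, ← sum_mul, hswap]

theorem sum_primesLE_log_div_mul_inv_log_sub_le {k : ℕ} (hk : 2 ≤ k) :
    (∑ p ∈ primesLE k, Real.log p / p) * ((Real.log k)⁻¹ - (Real.log (k + 1 : ℕ))⁻¹) ≤
      Real.log (Real.log (k + 1 : ℕ)) - Real.log (Real.log k) +
        2 * ((Real.log k)⁻¹ - (Real.log (k + 1 : ℕ))⁻¹) := by
  have hlog : 0 < Real.log k := Real.log_pos (by exact_mod_cast hk)
  have hlog_succ : Real.log k ≤ Real.log (k + 1 : ℕ) :=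
    Real.log_le_log (by positivity) (mod_cast k.le_succ)
  calc (∑ p ∈ primesLE k, Real.log p / p) * ((Real.log k)⁻¹ - (Real.log (k + 1 : ℕ))⁻¹)
      ≤ (Real.log k + 2) * ((Real.log k)⁻¹ - (Real.log (k + 1 : ℕ))⁻¹) :=
        mul_le_mul_of_nonneg_right (sum_primesLE_log_div_le k)
          (sub_nonneg.2 (inv_anti₀ hlog hlog_succ))
    _ = Real.log k * ((Real.log k)⁻¹ - (Real.log (k + 1 : ℕ))⁻¹) +
          2 * ((Real.log k)⁻¹ - (Real.log (k + 1 : ℕ))⁻¹) := by ring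
    _ ≤ _ := by
        gcongr
        exact mul_inv_sub_inv_le_log_sub_log hlog (hlog.trans_le hlog_succ)

theorem two_mul_inv_log_two_sub_log_log_two_le :
    2 * (Real.log 2)⁻¹ - Real.log (Real.log 2) ≤ 4 := by
  have hlog2 : 0 < Real.log 2 := Real.log_pos one_lt_two
  have h := Real.log_le_sub_one_of_pos (inv_pos.2 hlog2)
  have : (Real.log 2)⁻¹ ≤ 3 / 2 := by
    rw [inv_le_comm₀ hlog2 (by norm_num)]
    linarith [Real.log_two_gt_d9]
  rw [Real.log_inv] at h
  linarith

theorem sum_primesLE_inv_le {n : ℕ} (hn : 2 ≤ n) :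
    ∑ p ∈ primesLE n, (p : ℝ)⁻¹ ≤ Real.log (Real.log n) + 5 := by
  set g : ℕ → ℝ := fun k => (Real.log k)⁻¹
  have hlog : 0 < Real.log n := Real.log_pos (by exact_mod_cast hn)
  have hfirst : (∑ p ∈ primesLE n, Real.log p / p) * g n ≤ 1 + 2 * g n := by
    have := mul_le_mul_of_nonneg_right (sum_primesLE_log_div_le n) (inv_nonneg.2 hlog.le)
    rwa [add_mul, mul_inv_cancel₀ hlog.ne'] at this
  have htel_g : ∑ k ∈ Ico 2 n, (g k - g (k + 1)) = g 2 - g n := by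
    simpa only [sub_neg_eq_add, neg_add_eq_sub] using sum_Ico_sub (fun k => -g k) hn
  have htel_loglog : ∑ k ∈ Ico 2 n, (Real.log (Real.log (k + 1 : ℕ)) - Real.log (Real.log k)) =
      Real.log (Real.log n) - Real.log (Real.log 2) :=
    mod_cast sum_Ico_sub (fun k : ℕ => Real.log (Real.log k)) hn
  have hg2 : 2 * g 2 - Real.log (Real.log 2) ≤ 4 := by
    simpa [g] using two_mul_inv_log_two_sub_log_log_two_le
  calc ∑ p ∈ primesLE n, (p : ℝ)⁻¹
      = (∑ p ∈ primesLE n, Real.log p / p) * g n +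
          ∑ k ∈ Ico 2 n, (∑ p ∈ primesLE k, Real.log p / p) * (g k - g (k + 1)) :=
        sum_primesLE_inv_eq n
    _ ≤ (1 + 2 * g n) + ∑ k ∈ Ico 2 n,
          ((Real.log (Real.log (k + 1 : ℕ)) - Real.log (Real.log k)) + 2 * (g k - g (k + 1))) :=
        _root_.add_le_add hfirst (sum_le_sum fun k hk =>
          sum_primesLE_log_div_mul_inv_log_sub_le (mem_Ico.1 hk).1)
    _ = 1 + Real.log (Real.log n) - Real.log (Real.log 2) + 2 * g 2 := by
        rw [sum_add_distrib, htel_loglog, ← mul_sum, htel_g]; ring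
    _ ≤ Real.log (Real.log n) + 5 := by linarith

theorem sum_smoothNumbersUpTo_inv_le (N k : ℕ) :
    ∑ m ∈ smoothNumbersUpTo N k, (m : ℝ)⁻¹ ≤ ∏ p ∈ primesBelow k, (1 - (p : ℝ)⁻¹)⁻¹ := by
  set f : ℕ →* ℝ := invMonoidHom.comp (castRingHom ℝ)
  have hf : ∀ {p : ℕ}, p.Prime → ‖f p‖ < 1 := fun {p} hp => by
    have : (1 : ℝ) < p := mod_cast hp.one_lt
    simpa [f, abs_of_pos (zero_lt_one.trans this)] using inv_lt_one_of_one_lt₀ this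
  have hsum := (EulerProduct.summable_and_hasSum_smoothNumbers_prod_primesBelow_geometric hf k).2
  rw [← sum_subtype_of_mem _ fun m hm => (mem_smoothNumbersUpTo.1 hm).2]
  exact sum_le_hasSum _ (fun m _ => by simp) hsum

theorem prod_primesLE_inv_one_sub_inv_le {t : ℕ} (ht : 2 ≤ t) :
    ∏ p ∈ primesLE t, (1 - (p : ℝ)⁻¹)⁻¹ ≤ Real.exp 7 * Real.log t := by
  have hsq : ∑ p ∈ primesLE t, ((p : ℝ) ^ 2)⁻¹ ≤ 1 :=
    calc ∑ p ∈ primesLE t, ((p : ℝ) ^ 2)⁻¹ ≤ ∑ k ∈ Ioo 1 (t + 1), ((k : ℝ) ^ 2)⁻¹ :=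
          sum_le_sum_of_subset_of_nonneg (fun p hp => mem_Ioo.2
            ⟨(prime_of_mem_primesLE hp).one_lt, lt_succ_of_le (le_of_mem_primesLE hp)⟩)
            fun _ _ _ => by positivity
      _ ≤ 1 := (sum_Ioo_inv_sq_le 1 (t + 1)).trans (by norm_num)
  calc ∏ p ∈ primesLE t, (1 - (p : ℝ)⁻¹)⁻¹
      ≤ ∏ p ∈ primesLE t, Real.exp ((p : ℝ)⁻¹ + 2 * ((p : ℝ)⁻¹) ^ 2) := by
        refine prod_le_prod (fun p hp => ?_) fun p hp => inv_one_sub_le_exp ?_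
        · have : (1 : ℝ) < p := mod_cast (prime_of_mem_primesLE hp).one_lt
          exact inv_nonneg.2 (sub_nonneg.2 (inv_le_one_of_one_le₀ this.le))
        · rw [one_div]
          exact inv_anti₀ two_pos (mod_cast (prime_of_mem_primesLE hp).two_le)
    _ = Real.exp (∑ p ∈ primesLE t, (p : ℝ)⁻¹ + 2 * ∑ p ∈ primesLE t, ((p : ℝ) ^ 2)⁻¹) := by
        rw [← Real.exp_sum, sum_add_distrib, mul_sum]; simp [inv_pow]
    _ ≤ Real.exp (Real.log (Real.log t) + 7) :=
        Real.exp_le_exp.2 (by linarith [sum_primesLE_inv_le ht])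
    _ = Real.exp 7 * Real.log t := by
        rw [Real.exp_add, Real.exp_log (Real.log_pos (by exact_mod_cast ht)), mul_comm]

theorem sum_log_roughPart_le (t N : ℕ) :
    ∑ n ∈ Icc 1 N with #{p ∈ n.primeFactors | t < p} ≤ 1, Real.log (roughPart t n) ≤
      ∑ m ∈ smoothNumbersUpTo N (t + 1), ∑ q ∈ Ioc 0 (N / m) with IsPrimePow q, Real.log q := by
  set S := {n ∈ Icc 1 N | #{p ∈ n.primeFactors | t < p} ≤ 1}
  set pair : ℕ → (_ : ℕ) × ℕ := fun n => ⟨smoothPart t n, roughPart t n⟩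
  have hmaps : ∀ n ∈ {n ∈ S | roughPart t n ≠ 1},
      pair n ∈ (smoothNumbersUpTo N (t + 1)).sigma fun m => {q ∈ Ioc 0 (N / m) | IsPrimePow q} := by
    intro n hn
    simp only [S, mem_filter, mem_Icc] at hn
    obtain ⟨⟨⟨hn1, hnN⟩, hcard⟩, hr⟩ := hn
    have hsr := smoothPart_mul_roughPart (t := t) (n := n) (by omega)
    simp only [pair, mem_sigma, mem_smoothNumbersUpTo, mem_filter, mem_Ioc]
    refine ⟨⟨(smoothPart_le (by omega)).trans hnN, smoothPart_mem_smoothNumbers t n⟩,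
      ⟨pos_of_ne_zero fun h0 => ?_, (le_div_iff_mul_le (smoothPart_pos t n)).2 ?_⟩,
      (roughPart_eq_one_or_isPrimePow hcard).resolve_left hr⟩
    · rw [h0, mul_zero] at hsr; omega
    · rw [mul_comm, hsr]; exact hnN
  have hinj : Set.InjOn pair ({n ∈ S | roughPart t n ≠ 1} : Finset ℕ) := by
    intro a ha b hb hab
    simp only [pair, Sigma.mk.injEq, heq_eq_eq] at hab
    have ha0 : a ≠ 0 := by simp [S] at ha; omega
    have hb0 : b ≠ 0 := by simp [S] at hb; omega
    rw [← smoothPart_mul_roughPart (t := t) ha0, ← smoothPart_mul_roughPart (t := t) hb0,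
      hab.1, hab.2]
  calc ∑ n ∈ S, Real.log (roughPart t n)
      = ∑ n ∈ S with roughPart t n ≠ 1, Real.log (roughPart t n) := by
        refine (sum_filter_of_ne (p := fun n => roughPart t n ≠ 1) fun n _ h hr => h ?_).symm
        rw [hr, cast_one, Real.log_one]
    _ = ∑ x ∈ {n ∈ S | roughPart t n ≠ 1}.image pair, Real.log x.2 :=
        (sum_image (f := fun x : (_ : ℕ) × ℕ => Real.log x.2) hinj).symm
    _ ≤ ∑ x ∈ (smoothNumbersUpTo N (t + 1)).sigma fun m => {q ∈ Ioc 0 (N / m) | IsPrimePow q},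
          Real.log x.2 :=
        sum_le_sum_of_subset_of_nonneg (image_subset_iff.2 hmaps)
          fun x _ _ => Real.log_natCast_nonneg _
    _ = _ := sum_sigma _ _ _

theorem sum_log_roughPart_le_mul_log {t : ℕ} (ht : 2 ≤ t) (N : ℕ) :
    ∑ n ∈ Icc 1 N with #{p ∈ n.primeFactors | t < p} ≤ 1, Real.log (roughPart t n) ≤
      50 * Real.exp 7 * N * Real.log t :=
  calc _ ≤ ∑ m ∈ smoothNumbersUpTo N (t + 1), ∑ q ∈ Ioc 0 (N / m) with IsPrimePow q,
            Real.log q :=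
        sum_log_roughPart_le t N
    _ ≤ ∑ m ∈ smoothNumbersUpTo N (t + 1), 50 * ((N : ℝ) / m) := by
        refine sum_le_sum fun m _ => ?_
        rw [← floor_div_eq_div (K := ℝ)]
        exact Chebyshev.sum_log_isPrimePow_le (by positivity)
    _ = 50 * N * ∑ m ∈ smoothNumbersUpTo N (t + 1), (m : ℝ)⁻¹ := by
        rw [mul_sum]; exact sum_congr rfl fun m _ => by ring
    _ ≤ 50 * N * (Real.exp 7 * Real.log t) := by
        gcongr
        exact (sum_smoothNumbersUpTo_inv_le N (t + 1)).trans (prod_primesLE_inv_one_sub_inv_le ht)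
    _ = 50 * Real.exp 7 * N * Real.log t := by ring

theorem card_primeFactors_filter_lt_le_one_mul_log_le {t : ℕ} (ht : 2 ≤ t) (N : ℕ) :
    (#{n ∈ Icc 1 N | #{p ∈ n.primeFactors | t < p} ≤ 1} : ℝ) * Real.log N ≤
      (10 + 50 * Real.exp 7) * N * Real.log t := by
  set S := {n ∈ Icc 1 N | #{p ∈ n.primeFactors | t < p} ≤ 1}
  have hS : S ⊆ Icc 1 N := filter_subset _ _
  have hsplit : (#S : ℝ) * Real.log N = ∑ n ∈ S, Real.log ((N : ℝ) / n) +
      ∑ n ∈ S, Real.log (smoothPart t n) + ∑ n ∈ S, Real.log (roughPart t n) := by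
    rw [← sum_add_distrib, ← sum_add_distrib, card_eq_sum_ones, cast_sum, sum_mul]
    refine sum_congr rfl fun n hn => ?_
    obtain ⟨hn1, hnN⟩ := mem_Icc.1 (hS hn)
    rw [add_assoc, log_smoothPart_add_log_roughPart (by omega),
      Real.log_div (mod_cast (by omega : N ≠ 0)) (mod_cast (by omega : n ≠ 0)), cast_one, one_mul,
      sub_add_cancel]
  have hquot : ∑ n ∈ S, Real.log ((N : ℝ) / n) ≤ N :=
    (sum_le_sum_of_subset_of_nonneg hS fun n hn _ => Real.log_nonneg <| by
      rw [le_div_iff₀ (mod_cast (mem_Icc.1 hn).1), one_mul]; exact_mod_cast (mem_Icc.1 hn).2).trans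
      (sum_Icc_log_div_le N)
  have hsmooth : ∑ n ∈ S, Real.log (smoothPart t n) ≤ 2 * N * (Real.log t + 2) :=
    (sum_le_sum_of_subset_of_nonneg hS fun n _ _ => Real.log_natCast_nonneg _).trans
      ((sum_Icc_log_smoothPart t N).trans_le (log_smoothPart_factorial_le t N))
  have hrough := sum_log_roughPart_le_mul_log ht N
  have hlogt : 0.69 ≤ Real.log t :=
    (Real.log_two_gt_d9.le.trans' (by norm_num)).trans (Real.log_le_log two_pos (mod_cast ht))
  have hN : (0 : ℝ) ≤ N := N.cast_nonneg
  nlinarith [Real.exp_pos 7]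

end Nat

theorem log_le_two_mul_log_floor {x : ℝ} (hx : 2 ≤ x) : log x ≤ 2 * log ⌊x⌋₊ := by
  have hN : (2 : ℝ) ≤ ⌊x⌋₊ := mod_cast Nat.le_floor (n := 2) (mod_cast hx)
  rw [← log_rpow (by positivity)]
  refine log_le_log (by linarith) ?_
  norm_num
  nlinarith [Nat.lt_floor_add_one x]

/-- There is `C > 0` such that uniformly for `2 ≤ T ≤ x`, the number of `n ≤ x`
with `P₂(n) ≤ T` is at most `C x log T / log x`. -/
theorem count_small_second_largest_prime_factor :
    ∃ C > (0 : ℝ), ∀ x T : ℝ, 2 ≤ T → T ≤ x →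
      (((Finset.Icc 1 ⌊x⌋₊).filter (fun n => (secondLargestPrimeFac n : ℝ) ≤ T)).card : ℝ)
        ≤ C * x * Real.log T / Real.log x := by
  set C : ℝ := 10 + 50 * Real.exp 7
  refine ⟨2 * C, by positivity, fun x T hT hTx => ?_⟩
  have hx : 2 ≤ x := hT.trans hTx
  have ht : 2 ≤ ⌊T⌋₊ := Nat.le_floor (by exact_mod_cast hT)
  set S := {n ∈ Icc 1 ⌊x⌋₊ | #{p ∈ n.primeFactors | ⌊T⌋₊ < p} ≤ 1}
  have hsub : {n ∈ Icc 1 ⌊x⌋₊ | (secondLargestPrimeFac n : ℝ) ≤ T} ⊆ S :=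
    monotone_filter_right _ fun n _ h => card_primeFactors_filter_lt_le_one (Nat.le_floor h)
  rw [le_div_iff₀ (Real.log_pos (by linarith))]
  calc _ ≤ (#S : ℝ) * (2 * Real.log ⌊x⌋₊) :=
        mul_le_mul (mod_cast card_le_card hsub) (log_le_two_mul_log_floor hx)
          (Real.log_nonneg (by linarith)) (Nat.cast_nonneg _)
    _ = 2 * ((#S : ℝ) * Real.log ⌊x⌋₊) := by ring
    _ ≤ 2 * (C * ⌊x⌋₊ * Real.log ⌊T⌋₊) := by
        gcongr 2 * ?_
        exact Nat.card_primeFactors_filter_lt_le_one_mul_log_le ht _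
    _ ≤ 2 * (C * x * Real.log T) := by
        gcongr 2 * (C * ?_ * ?_)
        · exact Nat.floor_le (by linarith)
        · exact Real.log_le_log (mod_cast (by omega : 0 < ⌊T⌋₊)) (Nat.floor_le (by linarith))
    _ = 2 * C * x * Real.log T := by ring
end
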